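/- Let B be a d×d real matrix with B^T + B ≤ 0, and V = {x : ‖e^{tB}x‖ = ‖x‖ for all t ∈ R}. The restriction of B to V^⊥ is Hurwitz, i.e., every eigenvalue of B restricted to V^⊥ has strictly negative real part. -/

import Mathlib

/-!
Write `B_ℂ` for `B` acting on `ℂ^d`. If `B_ℂ v = μ v`, then `e^{tB_ℂ} v = e^{tμ} v`, so with
`x = Re v` and `y = Im v` we get `‖e^{tB} x‖² + ‖e^{tB} y‖² = e^{2t Re μ} ‖v‖²`. Since
`Bᵀ + B ≤ 0`, each of `t ↦ ‖e^{tB} x‖²` and `t ↦ ‖e^{tB} y‖²` is antitone. If `Re μ ≥ 0` their sum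
is monotone, so both are constant: `x, y ∈ V`. Then `x, y ∈ V ∩ V^⊥ = 0`, contradicting `v ≠ 0`.
-/

open Matrix

/-- The Euclidean norm on `ℝ^d`. -/
noncomputable def eNorm {d : ℕ} (x : Fin d → ℝ) : ℝ := Real.sqrt (x ⬝ᵥ x)

open NormedSpace

theorem Antitone.eq_of_monotone_add {α β : Type*} [LinearOrder α] [AddCommMonoid β]
    [PartialOrder β] [IsOrderedCancelAddMonoid β] {f g : α → β} (hf : Antitone f)
    (hg : Antitone g) (hfg : Monotone (f + g)) (a b : α) : f a = f b := by
  have key {a b : α} (hab : a ≤ b) : f a = f b := by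
    refine le_antisymm ?_ (hf hab)
    have : f a + g a ≤ f b + g a :=
      calc f a + g a ≤ f b + g b := hfg hab
        _ ≤ f b + g a := by gcongr; exact hg hab
    exact le_of_add_le_add_right this
  rcases le_total a b with hab | hba
  · exact key hab
  · exact (key hba).symm

section

variable {m n : Type*} [Fintype n]

theorem HasDerivAt.dotProduct {𝕜 : Type*} [NontriviallyNormedField 𝕜] {f g : 𝕜 → n → 𝕜}
    {f' g' : n → 𝕜} {t : 𝕜} (hf : HasDerivAt f f' t) (hg : HasDerivAt g g' t) :
    HasDerivAt (fun s => f s ⬝ᵥ g s) (f' ⬝ᵥ g t + f t ⬝ᵥ g') t := by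
  have := HasDerivAt.fun_sum (u := Finset.univ) fun i _ =>
    (hasDerivAt_pi.1 hf i).mul (hasDerivAt_pi.1 hg i)
  simpa only [_root_.dotProduct, Pi.mul_apply, Finset.sum_add_distrib] using this

theorem dotProduct_mulVec_add_transpose {R : Type*} [CommSemiring R] (B : Matrix n n R)
    (w : n → R) :
    w ⬝ᵥ ((Bᵀ + B) *ᵥ w) = B *ᵥ w ⬝ᵥ w + w ⬝ᵥ B *ᵥ w := by
  rw [add_mulVec, dotProduct_add, mulVec_transpose, dotProduct_comm w (w ᵥ* B),
    ← dotProduct_mulVec, dotProduct_comm (B *ᵥ w)]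

theorem pow_mulVec_of_mulVec_eq_smul [DecidableEq n] {R : Type*} [CommSemiring R]
    {A : Matrix n n R} {μ : R} {v : n → R} (h : A *ᵥ v = μ • v) (k : ℕ) :
    A ^ k *ᵥ v = μ ^ k • v := by
  induction k with
  | zero => simp
  | succ k ih => rw [pow_succ, ← mulVec_mulVec, h, mulVec_smul, ih, smul_smul, pow_succ']

theorem re_map_ofReal_mulVec (M : Matrix m n ℝ) (v : n → ℂ) :
    (fun i => ((M.map (↑) *ᵥ v) i).re) = M *ᵥ fun j => (v j).re := by
  ext i
  simp [mulVec, _root_.dotProduct, Complex.re_sum]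

theorem im_map_ofReal_mulVec (M : Matrix m n ℝ) (v : n → ℂ) :
    (fun i => ((M.map (↑) *ᵥ v) i).im) = M *ᵥ fun j => (v j).im := by
  ext i
  simp [mulVec, _root_.dotProduct, Complex.im_sum]

theorem dotProduct_re_add_dotProduct_im (w : n → ℂ) :
    (fun i => (w i).re) ⬝ᵥ (fun i => (w i).re) + (fun i => (w i).im) ⬝ᵥ (fun i => (w i).im) =
      ∑ i, Complex.normSq (w i) := by
  simp only [_root_.dotProduct, ← Finset.sum_add_distrib, Complex.normSq_apply]

variable [DecidableEq n]

section MatrixNorm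

attribute [local instance] Matrix.linftyOpNormedRing Matrix.linftyOpNormedAlgebra

theorem exp_mulVec_of_mulVec_eq_smul {𝕂 : Type*} [RCLike 𝕂] {A : Matrix n n 𝕂} {μ : 𝕂}
    {v : n → 𝕂} (h : A *ᵥ v = μ • v) : exp A *ᵥ v = exp μ • v := by
  have hA := (exp_series_hasSum_exp' (𝕂 := 𝕂) A).map (mulVec.addMonoidHomLeft v)
    (continuous_id.matrix_mulVec continuous_const)
  have hμ := (exp_series_hasSum_exp' (𝕂 := 𝕂) μ).smul_const v
  refine hA.unique ?_
  convert hμ using 2 with k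
  simp [mulVec.addMonoidHomLeft, smul_mulVec, pow_mulVec_of_mulVec_eq_smul h, smul_smul]

theorem hasDerivAt_exp_smul_mulVec (B : Matrix n n ℝ) (x : n → ℝ) (t : ℝ) :
    HasDerivAt (fun t : ℝ => exp (t • B) *ᵥ x) (B *ᵥ (exp (t • B) *ᵥ x)) t := by
  rw [mulVec_mulVec]
  exact (((mulVecBilin ℝ ℝ).flip x).toContinuousLinearMap.hasFDerivAt).comp_hasDerivAt t
    (hasDerivAt_exp_smul_const' B t)

theorem map_ofReal_exp (A : Matrix n n ℝ) :
    (exp A).map ((↑) : ℝ → ℂ) = exp (A.map (↑)) :=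
  map_exp Complex.ofRealHom.mapMatrix (continuous_id.matrix_map Complex.continuous_ofReal) A

end MatrixNorm

theorem antitone_dotProduct_exp_smul_mulVec {B : Matrix n n ℝ}
    (hB : ∀ x : n → ℝ, x ⬝ᵥ ((Bᵀ + B) *ᵥ x) ≤ 0) (x : n → ℝ) :
    Antitone fun t : ℝ => exp (t • B) *ᵥ x ⬝ᵥ exp (t • B) *ᵥ x := by
  have hderiv (t : ℝ) :=
    (hasDerivAt_exp_smul_mulVec B x t).dotProduct (hasDerivAt_exp_smul_mulVec B x t)
  refine antitone_of_deriv_nonpos (fun t => (hderiv t).differentiableAt) fun t => ?_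
  rw [(hderiv t).deriv, ← dotProduct_mulVec_add_transpose]
  exact hB _

theorem dotProduct_exp_smul_mulVec_re_add_im {B : Matrix n n ℝ} {μ : ℂ} {v : n → ℂ}
    (h : B.map (↑) *ᵥ v = μ • v) (t : ℝ) :
    exp (t • B) *ᵥ (fun i => (v i).re) ⬝ᵥ exp (t • B) *ᵥ (fun i => (v i).re) +
      exp (t • B) *ᵥ (fun i => (v i).im) ⬝ᵥ exp (t • B) *ᵥ (fun i => (v i).im) =
      Real.exp (t * μ.re) ^ 2 * ∑ i, Complex.normSq (v i) := by
  have hexp : (exp (t • B)).map (↑) *ᵥ v = Complex.exp (t * μ) • v := by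
    rw [map_ofReal_exp, Complex.exp_eq_exp_ℂ]
    refine exp_mulVec_of_mulVec_eq_smul ?_
    rw [show (t • B).map ((↑) : ℝ → ℂ) = (t : ℂ) • B.map (↑) by ext; simp, smul_mulVec, h,
      smul_smul]
  rw [← re_map_ofReal_mulVec, ← im_map_ofReal_mulVec, dotProduct_re_add_dotProduct_im, hexp]
  simp [Finset.mul_sum, Complex.normSq_eq_norm_sq, Complex.norm_exp, mul_pow]

end

/-- The restriction of `B` to `V^⊥` is Hurwitz: every (complex) eigenvalue of `B` whose
eigenvector lies in the complexification of `V^⊥` has strictly negative real part. -/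
theorem restriction_to_orthogonal_hurwitz {d : ℕ} (B : Matrix (Fin d) (Fin d) ℝ)
    (hB : ∀ x : Fin d → ℝ, x ⬝ᵥ ((Bᵀ + B).mulVec x) ≤ 0)
    (V : Set (Fin d → ℝ))
    (hV : V = {x | ∀ t : ℝ, eNorm ((NormedSpace.exp (t • B)).mulVec x) = eNorm x})
    (μ : ℂ) (v : Fin d → ℂ) (hv : v ≠ 0)
    (heig : (B.map (fun r => (r : ℂ))).mulVec v = μ • v)
    (hre : ∀ y ∈ V, y ⬝ᵥ (fun i => (v i).re) = 0)
    (him : ∀ y ∈ V, y ⬝ᵥ (fun i => (v i).im) = 0) :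
    μ.re < 0 := by
  by_contra! hμ
  set x : Fin d → ℝ := fun i => (v i).re
  set y : Fin d → ℝ := fun i => (v i).im
  set N : (Fin d → ℝ) → ℝ → ℝ := fun u t => exp (t • B) *ᵥ u ⬝ᵥ exp (t • B) *ᵥ u with hN
  have hsum : Monotone (N x + N y) := by
    intro a b hab
    simp only [Pi.add_apply, hN]
    rw [dotProduct_exp_smul_mulVec_re_add_im heig, dotProduct_exp_smul_mulVec_re_add_im heig]
    have : 0 ≤ ∑ i, Complex.normSq (v i) := Finset.sum_nonneg fun i _ => Complex.normSq_nonneg _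
    gcongr
  have hmem (u : Fin d → ℝ) (hu : ∀ t, N u t = N u 0) : u ∈ V := by
    rw [hV]
    intro t
    simpa [eNorm, hN] using congrArg Real.sqrt (hu t)
  have hx : x ∈ V := hmem x fun t =>
    (antitone_dotProduct_exp_smul_mulVec hB x).eq_of_monotone_add
      (antitone_dotProduct_exp_smul_mulVec hB y) hsum t 0
  have hy : y ∈ V := hmem y fun t =>
    (antitone_dotProduct_exp_smul_mulVec hB y).eq_of_monotone_add
      (antitone_dotProduct_exp_smul_mulVec hB x) (add_comm (N x) (N y) ▸ hsum) t 0
  have hx0 := dotProduct_self_eq_zero.1 (hre x hx)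
  have hy0 := dotProduct_self_eq_zero.1 (him y hy)
  exact hv (funext fun i => Complex.ext (congrFun hx0 i) (congrFun hy0 i))
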